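/- Let G be a finite group, let K be a Carter subgroup of G, and let z ∈ Z(K) with z ≠ 1. Assume that any two Carter subgroups of C_G(z) are conjugate in C_G(z). If H is a Carter subgroup of G that is not conjugate to K in G, then z is not conjugate in G to any element of the centre Z(H) of H. -/

import Mathlib

/-!
If `g⁻¹ z g = h` with `h ∈ Z(H)`, then `z` centralizes both `K` and `gHg⁻¹`, so both are Carter
subgroups of `C_G(z)`. Conjugacy of Carter subgroups there makes `K` and `gHg⁻¹`, hence `K` and
`H`, conjugate in `G`.
-/

/-- A Carter subgroup of a group `G` is a nilpotent self-normalizing subgroup. -/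
def IsCarterSubgroup {G : Type*} [Group G] (K : Subgroup G) : Prop :=
  Group.IsNilpotent K ∧ Subgroup.normalizer (K : Set G) = K

namespace Subgroup

variable {G : Type*} [Group G]

theorem map_conj_map_conj (K : Subgroup G) (a b : G) :
    (K.map (MulAut.conj a).toMonoidHom).map (MulAut.conj b).toMonoidHom =
      K.map (MulAut.conj (b * a)).toMonoidHom := by
  rw [map_map, map_mul]
  rfl

theorem map_conj_one (K : Subgroup G) : K.map (MulAut.conj (1 : G)).toMonoidHom = K := by
  rw [map_one]
  exact map_id K

theorem map_conj_le_centralizer {H : Subgroup G} {h : G} (hh : ∀ k ∈ H, h * k = k * h)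
    (g : G) : H.map (MulAut.conj g).toMonoidHom ≤ centralizer {g * h * g⁻¹} := by
  rintro _ ⟨k, hk, rfl⟩
  rw [mem_centralizer_singleton_iff]
  simp only [MulEquiv.coe_toMonoidHom, MulAut.conj_apply]
  calc g * k * g⁻¹ * (g * h * g⁻¹) = g * (k * h) * g⁻¹ := by group
    _ = g * (h * k) * g⁻¹ := by rw [hh k hk]
    _ = g * h * g⁻¹ * (g * k * g⁻¹) := by group

theorem map_conj_eq_of_subgroupOf {C K L : Subgroup G} (hK : K ≤ C) (hL : L ≤ C) (c : C)
    (h : (K.subgroupOf C).map (MulAut.conj c).toMonoidHom = L.subgroupOf C) :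
    K.map (MulAut.conj (c : G)).toMonoidHom = L := by
  have hcomm : C.subtype.comp (MulAut.conj c).toMonoidHom =
      (MulAut.conj (c : G)).toMonoidHom.comp C.subtype := rfl
  have := congrArg (map C.subtype) h
  rwa [map_map, hcomm, ← map_map, map_subgroupOf_eq_of_le hK, map_subgroupOf_eq_of_le hL]
    at this

end Subgroup

namespace IsCarterSubgroup

variable {G : Type*} [Group G] {K : Subgroup G}

theorem subgroupOf (hK : IsCarterSubgroup K) {C : Subgroup G} (hKC : K ≤ C) :
    IsCarterSubgroup (K.subgroupOf C) := by
  have := hK.1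
  exact ⟨Group.nilpotent_of_mulEquiv (Subgroup.subgroupOfEquivOfLe hKC).symm,
    by rw [← Subgroup.subgroupOf_normalizer_eq hKC, hK.2]⟩

theorem map_conj (hK : IsCarterSubgroup K) (g : G) :
    IsCarterSubgroup (K.map (MulAut.conj g).toMonoidHom) := by
  have := hK.1
  exact ⟨Group.nilpotent_of_mulEquiv ((MulAut.conj g : G ≃* G).subgroupMap K),
    by rw [← Subgroup.map_equiv_normalizer_eq K (MulAut.conj g : G ≃* G), hK.2]⟩

theorem exists_map_conj_eq_of_le {C : Subgroup G}
    (hconj : ∀ K₁ K₂ : Subgroup C, IsCarterSubgroup K₁ → IsCarterSubgroup K₂ →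
      ∃ c : C, K₁.map (MulAut.conj c).toMonoidHom = K₂)
    {L : Subgroup G} (hK : IsCarterSubgroup K) (hL : IsCarterSubgroup L)
    (hKC : K ≤ C) (hLC : L ≤ C) : ∃ c : G, K.map (MulAut.conj c).toMonoidHom = L := by
  obtain ⟨c, hc⟩ := hconj _ _ (hK.subgroupOf hKC) (hL.subgroupOf hLC)
  exact ⟨c, Subgroup.map_conj_eq_of_subgroupOf hKC hLC c hc⟩

end IsCarterSubgroup

theorem not_conjugate_to_center_of_nonconjugate_carter_general {G : Type*} [Group G]
    (K : Subgroup G) (hK : IsCarterSubgroup K)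
    (z : G) (hzc : ∀ k ∈ K, z * k = k * z)
    (hconj : ∀ K₁ K₂ : Subgroup ↥(Subgroup.centralizer {z}),
      IsCarterSubgroup K₁ → IsCarterSubgroup K₂ →
      ∃ g : ↥(Subgroup.centralizer {z}), K₁.map (MulAut.conj g).toMonoidHom = K₂)
    (H : Subgroup G) (hH : IsCarterSubgroup H)
    (hnc : ¬ ∃ g : G, K.map (MulAut.conj g).toMonoidHom = H) :
    ∀ g h : G, h ∈ H → (∀ k ∈ H, h * k = k * h) → g⁻¹ * z * g ≠ h := by
  intro g h _ hh hzh
  have hKz : K ≤ Subgroup.centralizer {z} := fun k hk =>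
    Subgroup.mem_centralizer_singleton_iff.mpr (hzc k hk).symm
  have hHz : H.map (MulAut.conj g).toMonoidHom ≤ Subgroup.centralizer {z} := by
    simpa only [← hzh, mul_assoc, mul_inv_cancel_left, mul_inv_cancel, mul_one]
      using Subgroup.map_conj_le_centralizer hh g
  obtain ⟨c, hc⟩ := hK.exists_map_conj_eq_of_le hconj (hH.map_conj g) hKz hHz
  refine hnc ⟨g⁻¹ * c, ?_⟩
  rw [← Subgroup.map_conj_map_conj, hc, Subgroup.map_conj_map_conj, inv_mul_cancel,
    Subgroup.map_conj_one]

/-- If `H` is a Carter subgroup not conjugate to `K`, then a nontrivial central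
element `z` of `K` is not conjugate to any element of `Z(H)`, provided Carter
subgroups of `C_G(z)` are conjugate. -/
theorem not_conjugate_to_center_of_nonconjugate_carter {G : Type*} [Group G] [Finite G]
    (K : Subgroup G) (hK : IsCarterSubgroup K)
    (z : G) (hz : z ≠ 1) (hzK : z ∈ K) (hzc : ∀ k ∈ K, z * k = k * z)
    (hconj : ∀ K₁ K₂ : Subgroup ↥(Subgroup.centralizer {z}),
      IsCarterSubgroup K₁ → IsCarterSubgroup K₂ →
      ∃ g : ↥(Subgroup.centralizer {z}), K₁.map (MulAut.conj g).toMonoidHom = K₂)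
    (H : Subgroup G) (hH : IsCarterSubgroup H)
    (hnc : ¬ ∃ g : G, K.map (MulAut.conj g).toMonoidHom = H) :
    ∀ g h : G, h ∈ H → (∀ k ∈ H, h * k = k * h) → g⁻¹ * z * g ≠ h :=
  not_conjugate_to_center_of_nonconjugate_carter_general K hK z hzc hconj H hH hnc
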